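/- arXiv:2401.16156 — 4 statements merged into one kernel-verified Lean document; each statement's English description precedes it below -/
import Mathlib

section
/- Let 0 < α < 1, t > 0, λ ≥ 0, and let h : [0,t] → ℝ be continuously differentiable with h(0) = 0. Then ∫₀ᵗ s^{α−1} E_{α,α}(−λ s^α) h(t−s) ds = ∫₀ᵗ s^{α} E_{α,1+α}(−λ s^α) h′(t−s) ds. -/
/-!
Expanding the Mittag-Leffler functions, both sides become series whose `k`-th terms agree by the
monomial identity `∫₀ᵗ s^(r-1) h(t-s) ds = r⁻¹ ∫₀ᵗ s^r h'(t-s) ds` for `r = α(k+1)`: integrate by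
parts, the boundary terms vanishing because `0^r = 0` and `h 0 = 0`, and use `Γ(r+1) = r Γ(r)`.
Summing and integrating may be interchanged because `Γ(αk+δ)` grows faster than any geometric
sequence: log-convexity of `Γ` gives `Γ(y+α) ≥ (y-1)^α Γ(y)`, so the ratio test applies.
-/

open MeasureTheory

/-- The generalized Mittag-Leffler function `E_{γ,δ}(x) = Σ_{k=0}^∞ x^k / Γ(γk + δ)`. -/
noncomputable def mittagLeffler (γ δ : ℝ) (x : ℝ) : ℝ :=
  ∑' k : ℕ, x ^ k / Real.Gamma (γ * k + δ)

open Set Filter Real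

namespace Real

theorem sub_one_rpow_mul_Gamma_le_Gamma_add {y a : ℝ} (hy : 1 < y) (ha : 0 < a) :
    (y - 1) ^ a * Gamma y ≤ Gamma (y + a) := by
  have hy1 : 0 < y - 1 := sub_pos.2 hy
  have hΓy : 0 < Gamma y := Gamma_pos_of_pos (by linarith)
  have hslope := convexOn_log_Gamma.slope_mono_adjacent (x := y - 1) (y := y) (z := y + a)
    (mem_Ioi.2 hy1) (mem_Ioi.2 (by linarith)) (by linarith) (by linarith)
  have hrec : Gamma y = (y - 1) * Gamma (y - 1) := by
    simpa using Gamma_add_one hy1.ne'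
  have hlog : log (Gamma y) - log (Gamma (y - 1)) = log (y - 1) := by
    rw [hrec, log_mul hy1.ne' (Gamma_pos_of_pos hy1).ne']
    ring
  simp only [Function.comp_apply, hlog, sub_sub_cancel, div_one, add_sub_cancel_left] at hslope
  rw [← log_le_log_iff (by positivity) (Gamma_pos_of_pos (by linarith)),
    log_mul (by positivity) hΓy.ne', log_rpow hy1]
  rw [le_div_iff₀ ha] at hslope
  linarith

theorem summable_pow_div_Gamma {α : ℝ} (hα : 0 < α) (δ x : ℝ) :
    Summable fun k : ℕ => x ^ k / Gamma (α * k + δ) := by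
  refine summable_of_ratio_norm_eventually_le (r := 1 / 2) (by norm_num) ?_
  have hy : Tendsto (fun k : ℕ => α * k + δ) atTop atTop :=
    tendsto_atTop_add_const_right _ _ (tendsto_natCast_atTop_atTop.const_mul_atTop hα)
  have hgrowth : Tendsto (fun k : ℕ => (α * k + δ - 1) ^ α) atTop atTop :=
    (tendsto_rpow_atTop hα).comp (tendsto_atTop_add_const_right _ _ hy)
  filter_upwards [hy.eventually_gt_atTop 1, hgrowth.eventually_ge_atTop (2 * |x|)]
    with k hk hgrow
  have hΓ : 0 < Gamma (α * k + δ) := Gamma_pos_of_pos (by linarith)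
  have hstep : 2 * |x| * Gamma (α * k + δ) ≤ Gamma (α * ↑(k + 1) + δ) := by
    rw [show α * ↑(k + 1) + δ = α * k + δ + α by push_cast; ring]
    exact (mul_le_mul_of_nonneg_right hgrow hΓ.le).trans (sub_one_rpow_mul_Gamma_le_Gamma_add hk hα)
  have hΓ' : 0 < Gamma (α * ↑(k + 1) + δ) := Gamma_pos_of_pos (by push_cast; linarith)
  rw [norm_div, norm_div, norm_pow, norm_pow, norm_of_nonneg hΓ.le, norm_of_nonneg hΓ'.le,
    div_le_iff₀ hΓ', pow_succ, norm_eq_abs]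
  calc |x| ^ k * |x|
      = 1 / 2 * (|x| ^ k / Gamma (α * k + δ)) * (2 * |x| * Gamma (α * k + δ)) := by field_simp
    _ ≤ 1 / 2 * (|x| ^ k / Gamma (α * k + δ)) * Gamma (α * ↑(k + 1) + δ) := by gcongr

end Real

theorem rpow_mul_mittagLeffler_eq_tsum (α β x : ℝ) {s : ℝ} (hs : 0 < s) :
    s ^ (β - 1) * mittagLeffler α β (x * s ^ α) =
      ∑' k : ℕ, x ^ k / Gamma (α * k + β) * s ^ (α * k + β - 1) := by
  rw [mittagLeffler, ← tsum_mul_left]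
  refine tsum_congr fun k => ?_
  rw [mul_pow, ← rpow_natCast (s ^ α), ← rpow_mul hs.le,
    show α * k + β - 1 = (β - 1) + α * k by ring, rpow_add hs]
  ring

section

variable {t : ℝ} {g : ℝ → ℝ}

theorem integrableOn_rpow_mul_comp_const_sub {r : ℝ} (hr : -1 < r) (ht : 0 < t)
    (hg : ContinuousOn g (Icc 0 t)) :
    IntegrableOn (fun s => s ^ r * g (t - s)) (Ioo 0 t) :=
  ((intervalIntegral.integrableOn_Ioo_rpow_iff ht).2 hr).mul_continuousOn_of_subset
    (hg.comp (continuous_sub_left t).continuousOn fun s hs => ⟨by simp [hs.2], by simp [hs.1]⟩)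
    measurableSet_Ioo isCompact_Icc Ioo_subset_Icc_self

theorem integral_Ioo_rpow {r : ℝ} (hr : -1 < r) (ht : 0 ≤ t) :
    ∫ s in Ioo 0 t, s ^ r = t ^ (r + 1) / (r + 1) := by
  rw [← integral_Ioc_eq_integral_Ioo, ← intervalIntegral.integral_of_le ht,
    integral_rpow (Or.inl hr), zero_rpow (by linarith), sub_zero]

theorem integral_norm_rpow_mul_comp_const_sub_le {r C : ℝ} (hr : -1 < r) (ht : 0 < t)
    (hC : ∀ s ∈ Icc 0 t, ‖g s‖ ≤ C) :
    ∫ s in Ioo 0 t, ‖s ^ r * g (t - s)‖ ≤ C * (t ^ (r + 1) / (r + 1)) := by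
  rw [← integral_Ioo_rpow hr ht.le, ← integral_const_mul]
  refine integral_mono_of_nonneg (.of_forall fun _ => norm_nonneg _)
    (((intervalIntegral.integrableOn_Ioo_rpow_iff ht).2 hr).const_mul C) ?_
  filter_upwards [ae_restrict_mem measurableSet_Ioo] with s hs
  rw [norm_mul, norm_of_nonneg (rpow_nonneg hs.1.le r), mul_comm]
  exact mul_le_mul_of_nonneg_right (hC _ ⟨by linarith [hs.2], by linarith [hs.1]⟩)
    (rpow_nonneg hs.1.le r)

theorem integral_rpow_mul_mittagLeffler_mul_comp_const_sub {α β : ℝ} (hα : 0 < α) (hβ : 0 < β)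
    (x : ℝ) (ht : 0 < t) (hg : ContinuousOn g (Icc 0 t)) :
    ∫ s in Ioo 0 t, s ^ (β - 1) * mittagLeffler α β (x * s ^ α) * g (t - s) =
      ∑' k : ℕ, x ^ k / Gamma (α * k + β) * ∫ s in Ioo 0 t, s ^ (α * k + β - 1) * g (t - s) := by
  obtain ⟨C, hC⟩ := isCompact_Icc.exists_bound_of_continuousOn hg
  have hr : ∀ k : ℕ, -1 < α * k + β - 1 := fun k => by
    have : 0 ≤ α * k := by positivity
    linarith
  set F : ℕ → ℝ → ℝ := fun k s => x ^ k / Gamma (α * k + β) * (s ^ (α * k + β - 1) * g (t - s))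
  have hF_int : ∀ k, IntegrableOn (F k) (Ioo 0 t) := fun k =>
    (integrableOn_rpow_mul_comp_const_sub (hr k) ht hg).const_mul _
  have hF_sum : Summable fun k => ∫ s in Ioo 0 t, ‖F k s‖ := by
    refine .of_nonneg_of_le (fun k => integral_nonneg fun _ => norm_nonneg _) (fun k => ?_)
      ((summable_pow_div_Gamma hα (β + 1) (|x| * t ^ α)).mul_left (C * t ^ β))
    have hk : 0 < α * k + β := by positivity
    calc ∫ s in Ioo 0 t, ‖F k s‖
        = ‖x ^ k / Gamma (α * k + β)‖ * ∫ s in Ioo 0 t, ‖s ^ (α * k + β - 1) * g (t - s)‖ := by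
          simp only [F, norm_mul, integral_const_mul]
      _ ≤ ‖x ^ k / Gamma (α * k + β)‖ * (C * (t ^ (α * k + β - 1 + 1) / (α * k + β - 1 + 1))) :=
          mul_le_mul_of_nonneg_left (integral_norm_rpow_mul_comp_const_sub_le (hr k) ht hC)
            (norm_nonneg _)
      _ = C * t ^ β * ((|x| * t ^ α) ^ k / Gamma (α * k + (β + 1))) := by
          rw [sub_add_cancel, ← add_assoc, Gamma_add_one hk.ne', rpow_add ht, mul_pow,
            ← rpow_natCast (t ^ α), ← rpow_mul ht.le, norm_div, norm_pow, norm_eq_abs,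
            norm_of_nonneg (Gamma_pos_of_pos hk).le]
          field_simp
  calc ∫ s in Ioo 0 t, s ^ (β - 1) * mittagLeffler α β (x * s ^ α) * g (t - s)
      = ∫ s in Ioo 0 t, ∑' k, F k s := by
        refine setIntegral_congr_fun measurableSet_Ioo fun s hs => ?_
        simp only [F, rpow_mul_mittagLeffler_eq_tsum α β x hs.1, ← tsum_mul_right, mul_assoc]
    _ = ∑' k, ∫ s in Ioo 0 t, F k s := (integral_tsum_of_summable_integral_norm hF_int hF_sum).symm
    _ = _ := by simp only [F, integral_const_mul]

theorem integral_rpow_sub_one_mul_comp_const_sub_eq {r : ℝ} (hr : 0 < r) (ht : 0 ≤ t)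
    {h h' : ℝ → ℝ} (hd : ∀ s ∈ Icc 0 t, HasDerivAt h (h' s) s) (hcont : ContinuousOn h' (Icc 0 t))
    (h0 : h 0 = 0) :
    ∫ s in Ioo 0 t, s ^ (r - 1) * h (t - s) = r⁻¹ * ∫ s in Ioo 0 t, s ^ r * h' (t - s) := by
  have hmaps : ∀ s ∈ uIcc 0 t, t - s ∈ Icc 0 t := fun s hs => by
    rw [uIcc_of_le ht] at hs
    exact ⟨by linarith [hs.2], by linarith [hs.1]⟩
  have hv : ∀ s ∈ uIcc 0 t, HasDerivAt (fun s => h (t - s)) (-h' (t - s)) s :=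
    fun s hs => (hd _ (hmaps s hs)).comp_const_sub t s
  have hu : ∀ s ∈ Ioo (min 0 t) (max 0 t), HasDerivAt (fun s => r⁻¹ * s ^ r) (s ^ (r - 1)) s :=
    fun s hs => by
      rw [min_eq_left ht, max_eq_right ht] at hs
      exact ((hasDerivAt_rpow_const (Or.inl hs.1.ne')).const_mul r⁻¹).congr_deriv
        (inv_mul_cancel_left₀ hr.ne' _)
  have hparts := intervalIntegral.integral_mul_deriv_eq_deriv_mul_of_hasDerivAt
    (u := fun s => r⁻¹ * s ^ r)
    ((continuous_const.mul (continuous_rpow_const hr.le)).continuousOn)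
    (fun s hs => (hv s hs).continuousAt.continuousWithinAt)
    hu (fun s hs => hv s (Ioo_subset_Icc_self hs))
    (intervalIntegral.intervalIntegrable_rpow' (by linarith))
    ((hcont.comp (continuous_sub_left t).continuousOn hmaps).neg.intervalIntegrable)
  simp only [sub_self, h0, zero_rpow hr.ne', mul_zero, zero_mul, sub_zero, mul_neg, mul_assoc,
    intervalIntegral.integral_of_le ht, integral_Ioc_eq_integral_Ioo, integral_neg,
    integral_const_mul, zero_sub, neg_inj] at hparts
  exact hparts.symm

end

theorem mittagLeffler_integration_by_parts_general (α lam t : ℝ)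
    (hα0 : 0 < α) (ht : 0 < t)
    (h h' : ℝ → ℝ)
    (hd : ∀ s ∈ Set.Icc (0 : ℝ) t, HasDerivAt h (h' s) s)
    (hcont : ContinuousOn h' (Set.Icc 0 t))
    (h0 : h 0 = 0) :
    ∫ s in Set.Ioo (0 : ℝ) t, s ^ (α - 1) * mittagLeffler α α (-lam * s ^ α) * h (t - s)
      = ∫ s in Set.Ioo (0 : ℝ) t,
          s ^ α * mittagLeffler α (1 + α) (-lam * s ^ α) * h' (t - s) := by
  have hh : ContinuousOn h (Icc 0 t) := fun s hs => (hd s hs).continuousAt.continuousWithinAt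
  have hrhs := integral_rpow_mul_mittagLeffler_mul_comp_const_sub (β := 1 + α) hα0 (by linarith)
    (-lam) ht hcont
  rw [add_sub_cancel_left] at hrhs
  rw [integral_rpow_mul_mittagLeffler_mul_comp_const_sub hα0 hα0 (-lam) ht hh, hrhs]
  refine tsum_congr fun k => ?_
  have hk : 0 < α * k + α := by positivity
  rw [integral_rpow_sub_one_mul_comp_const_sub_eq hk ht.le hd hcont h0,
    show α * k + (1 + α) = α * k + α + 1 by ring, Gamma_add_one hk.ne', add_sub_cancel_right]
  field_simp

/-- Integration-by-parts identity (equation (v1n) in the proof of Theorem 1 of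
the paper): for continuously differentiable `h` with `h(0) = 0`,
`∫₀ᵗ s^{α−1} E_{α,α}(−λ s^α) h(t−s) ds = ∫₀ᵗ s^α E_{α,1+α}(−λ s^α) h′(t−s) ds`. -/
theorem mittagLeffler_integration_by_parts (α lam t : ℝ)
    (hα0 : 0 < α) (hα1 : α < 1) (hlam : 0 ≤ lam) (ht : 0 < t)
    (h h' : ℝ → ℝ)
    (hd : ∀ s ∈ Set.Icc (0 : ℝ) t, HasDerivAt h (h' s) s)
    (hcont : ContinuousOn h' (Set.Icc 0 t))
    (h0 : h 0 = 0) :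
    ∫ s in Set.Ioo (0 : ℝ) t, s ^ (α - 1) * mittagLeffler α α (-lam * s ^ α) * h (t - s)
      = ∫ s in Set.Ioo (0 : ℝ) t,
          s ^ α * mittagLeffler α (1 + α) (-lam * s ^ α) * h' (t - s) :=
  mittagLeffler_integration_by_parts_general α lam t hα0 ht h h' hd hcont h0
end

section
/- Let 0 < α < 1, let t_0 = 0 < t_1 < … < t_N be the graded mesh t_k = T(k/N)^r with r ≥ 1, let φ_0,…,φ_N be the fitted basis functions, and let u^0,…,u^N be arbitrary real numbers. Then for every n with 1 ≤ n ≤ N, (1/Γ(1−α)) { (u^n − u^0)/t_n^α + α ∫₀^{t_n} (t_n − s)^{−α−1} Σ_{k=0}^{n−1} φ_k(s) (u^n − u^k) ds } = (α/Γ(1−α)) Σ_{k=0}^{n−1} [ (u^{k+1} − u^k)/(t_{k+1}^α − t_k^α) ] ∫_{t_k}^{t_{k+1}} s^{α−1} (t_n − s)^{−α} ds. -/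
/-!
On each subinterval `(t_k, t_{k+1})` only `φ_k` and `φ_{k+1}` are nonzero, so
`∑_k φ_k(s) (u^n - u^k)` is an affine function of `s^α` there. Integrating the kernel
`(t_n - s)^(-α-1)` against it by parts, with antiderivative `(t_n - s)^(-α) / α`, yields the
integrals of `s^(α-1) (t_n - s)^(-α)` plus boundary terms that telescope to
`-(u^n - u^0) / t_n^α`, cancelling the first term. On the last subinterval the affine function
vanishes at `s = t_n` (it interpolates `u^n - u^n`), and by concavity of `s^α` it does so at rate
`t_n - s`, which tames the singularity of the kernel there.
-/

open MeasureTheory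

/-- The graded temporal mesh `t_n = T (n/N)^r`. -/
noncomputable def mesh (r T : ℝ) (N : ℕ) (k : ℕ) : ℝ :=
  T * ((k : ℝ) / (N : ℝ)) ^ r

/-- The fitted basis functions `φ_k` on the mesh `t`, exact for `1` and `s^α`. -/
noncomputable def fittedBasis (α : ℝ) (t : ℕ → ℝ) (N : ℕ) (k : ℕ) (s : ℝ) : ℝ :=
  if k = 0 then
    if 0 ≤ s ∧ s ≤ t 1 then (t 1 ^ α - s ^ α) / t 1 ^ α else 0
  else if k = N then
    if t (N - 1) ≤ s ∧ s ≤ t N then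
      (s ^ α - t (N - 1) ^ α) / (t N ^ α - t (N - 1) ^ α)
    else 0
  else
    if t (k - 1) ≤ s ∧ s ≤ t k then
      (s ^ α - t (k - 1) ^ α) / (t k ^ α - t (k - 1) ^ α)
    else if t k ≤ s ∧ s ≤ t (k + 1) then
      (t (k + 1) ^ α - s ^ α) / (t (k + 1) ^ α - t k ^ α)
    else 0

/-- The discrete fitted Caputo operator `D_N^α` acting on grid values `u`. -/
noncomputable def discreteCaputo (α : ℝ) (t : ℕ → ℝ) (u : ℕ → ℝ) (n : ℕ) : ℝ :=
  (α / Real.Gamma (1 - α)) * ∑ k ∈ Finset.range n,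
    (u (k + 1) - u k) / (t (k + 1) ^ α - t k ^ α) *
      ∫ s in Set.Ioo (t k) (t (k + 1)), s ^ (α - 1) * (t n - s) ^ (-α)


open Set Filter Topology

lemma rpow_sub_rpow_le_mul_sub {α x y : ℝ} (hα0 : 0 ≤ α) (hα1 : α ≤ 1) (hx : 0 < x)
    (hxy : x ≤ y) : y ^ α - x ^ α ≤ α * x ^ (α - 1) * (y - x) := by
  rcases hxy.eq_or_lt with rfl | hxy
  · simp
  have h := (Real.concaveOn_rpow hα0 hα1).slope_le_of_hasDerivAt hx.le (hx.le.trans hxy.le) hxy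
    (Real.hasDerivAt_rpow_const (Or.inl hx.ne'))
  rwa [slope_def_field, div_le_iff₀ (sub_pos.2 hxy)] at h

lemma integrableOn_rpow_mul_sub_rpow {p q τ : ℝ} (hp : -1 < p) (hq : -1 < q) (hτ : 0 < τ) :
    IntegrableOn (fun s ↦ s ^ p * (τ - s) ^ q) (Icc 0 τ) := by
  rw [← Icc_union_Icc_eq_Icc (by linarith : 0 ≤ τ / 2) (by linarith : τ / 2 ≤ τ)]
  refine IntegrableOn.union ?_ ?_
  · refine IntegrableOn.mul_continuousOn ?_ ?_ isCompact_Icc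
    · exact (intervalIntegrable_iff_integrableOn_Icc_of_le (by linarith)).1
        (intervalIntegral.intervalIntegrable_rpow' hp)
    · exact (continuous_sub_left τ).continuousOn.rpow_const
        fun s hs ↦ Or.inl (by linarith [hs.2] : 0 < τ - s).ne'
  · refine IntegrableOn.continuousOn_mul ?_ ?_ isCompact_Icc
    · exact continuousOn_id.rpow_const fun s hs ↦ Or.inl (by linarith [hs.1] : 0 < s).ne'
    · have h :=
        (intervalIntegral.intervalIntegrable_rpow' hq (a := τ / 2) (b := 0)).comp_sub_left τ
      rw [sub_zero, show τ - τ / 2 = τ / 2 by ring] at h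
      exact (intervalIntegrable_iff_integrableOn_Icc_of_le (by linarith)).1 h

lemma norm_sub_rpow_mul_le {α β τ c d s : ℝ} (hα0 : 0 ≤ α) (hα1 : α ≤ 1)
    (hτ : d + c * τ ^ α = 0) (hs : 0 < s) (hsτ : s < τ) :
    ‖(τ - s) ^ β * (d + c * s ^ α)‖ ≤ |c| * α * (s ^ (α - 1) * (τ - s) ^ (β + 1)) := by
  have hd : d + c * s ^ α = -c * (τ ^ α - s ^ α) := by linear_combination hτ
  have hpow : 0 ≤ τ ^ α - s ^ α := sub_nonneg.2 (Real.rpow_le_rpow hs.le hsτ.le hα0)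
  have hβ : 0 ≤ (τ - s) ^ β := Real.rpow_nonneg (sub_pos.2 hsτ).le _
  have hconc := mul_le_mul_of_nonneg_left (rpow_sub_rpow_le_mul_sub hα0 hα1 hs hsτ.le)
    (mul_nonneg (abs_nonneg c) hβ)
  rw [hd, norm_mul, norm_mul, norm_neg, Real.norm_of_nonneg hβ, Real.norm_of_nonneg hpow,
    Real.norm_eq_abs, Real.rpow_add_one (sub_pos.2 hsτ).ne']
  linarith

lemma intervalIntegrable_rpow_mul_sub_rpow {p q τ a b : ℝ} (hp : -1 < p) (hq : -1 < q)
    (ha : 0 ≤ a) (hab : a ≤ b) (hbτ : b ≤ τ) (hτ : 0 < τ) :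
    IntervalIntegrable (fun s ↦ s ^ p * (τ - s) ^ q) volume a b :=
  (intervalIntegrable_iff_integrableOn_Icc_of_le hab).2
    ((integrableOn_rpow_mul_sub_rpow hp hq hτ).mono_set (Icc_subset_Icc ha hbτ))

lemma intervalIntegrable_sub_rpow_mul {α τ a b c d : ℝ} (hα0 : 0 < α) (hα1 : α < 1)
    (ha : 0 ≤ a) (hab : a < b) (hbτ : b ≤ τ) (hb : b = τ → d + c * τ ^ α = 0) :
    IntervalIntegrable (fun s ↦ (τ - s) ^ (-α - 1) * (d + c * s ^ α)) volume a b := by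
  rcases hbτ.lt_or_eq with hbτ | rfl
  · refine ContinuousOn.intervalIntegrable fun s hs ↦ ContinuousAt.continuousWithinAt ?_
    rw [uIcc_of_le hab.le] at hs
    have : τ - s ≠ 0 := (sub_pos.2 (hs.2.trans_lt hbτ)).ne'
    fun_prop (disch := first | exact Or.inl this | exact Or.inr hα0.le)
  · rw [intervalIntegrable_iff_integrableOn_Ioo_of_le hab.le]
    have hdom : IntegrableOn (fun s ↦ |c| * α * (s ^ (α - 1) * (b - s) ^ (-α - 1 + 1)))
        (Ioo a b) := by
      refine ((integrableOn_rpow_mul_sub_rpow (by linarith) (by linarith)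
        (ha.trans_lt hab)).mono_set ?_).const_mul _
      exact Ioo_subset_Icc_self.trans (Icc_subset_Icc_left ha)
    refine hdom.mono' (by fun_prop) ((ae_restrict_iff' measurableSet_Ioo).2 ?_)
    exact Eventually.of_forall fun s hs ↦
      norm_sub_rpow_mul_le hα0.le hα1.le (hb rfl) (ha.trans_lt hs.1) hs.2

lemma tendsto_sub_rpow_mul_nhdsLT {α τ b c d : ℝ} (hα0 : 0 < α) (hα1 : α < 1) (hb0 : 0 < b)
    (hbτ : b ≤ τ) (hb : b = τ → d + c * τ ^ α = 0) :
    Tendsto (fun s ↦ (τ - s) ^ (-α) * (d + c * s ^ α)) (𝓝[<] b)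
      (𝓝 ((τ - b) ^ (-α) * (d + c * b ^ α))) := by
  rcases hbτ.lt_or_eq with hbτ | rfl
  · have : τ - b ≠ 0 := (sub_pos.2 hbτ).ne'
    refine ContinuousAt.tendsto ?_ |>.mono_left nhdsWithin_le_nhds
    fun_prop (disch := first | exact Or.inl this | exact Or.inr hα0.le)
  · rw [hb rfl, mul_zero]
    have hbound : ContinuousAt (fun s ↦ |c| * α * (s ^ (α - 1) * (b - s) ^ (-α + 1))) b := by
      have : (0 : ℝ) ≤ -α + 1 := by linarith
      fun_prop (disch := first | exact Or.inl hb0.ne' | exact Or.inr this)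
    have hzero : |c| * α * (b ^ (α - 1) * (b - b) ^ (-α + 1)) = 0 := by
      rw [sub_self, Real.zero_rpow (by linarith), mul_zero, mul_zero]
    refine squeeze_zero_norm' ?_ (hzero ▸ hbound.tendsto.mono_left nhdsWithin_le_nhds)
    filter_upwards [Ioo_mem_nhdsLT hb0] with s hs
    exact norm_sub_rpow_mul_le hα0.le hα1.le (hb rfl) hs.1 hs.2

lemma hasDerivAt_sub_rpow_mul {α τ c d x : ℝ} (hx : 0 < x) (hxτ : x < τ) :
    HasDerivAt (fun s ↦ (τ - s) ^ (-α) * (d + c * s ^ α))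
      (α * ((τ - x) ^ (-α - 1) * (d + c * x ^ α)) + c * α * (x ^ (α - 1) * (τ - x) ^ (-α)))
      x := by
  have h₁ := ((hasDerivAt_id x).const_sub τ).rpow_const (p := -α) (Or.inl (sub_pos.2 hxτ).ne')
  have h₂ := ((Real.hasDerivAt_rpow_const (p := α) (Or.inl hx.ne')).const_mul c).const_add d
  exact (h₁.fun_mul h₂).congr_deriv (by simp only [id]; ring)

lemma integral_sub_rpow_mul_eq {α τ a b c d : ℝ} (hα0 : 0 < α) (hα1 : α < 1)
    (ha : 0 ≤ a) (hab : a < b) (hbτ : b ≤ τ) (hb : b = τ → d + c * τ ^ α = 0) :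
    α * ∫ s in a..b, (τ - s) ^ (-α - 1) * (d + c * s ^ α) =
      (τ - b) ^ (-α) * (d + c * b ^ α) - (τ - a) ^ (-α) * (d + c * a ^ α) -
        c * α * ∫ s in a..b, s ^ (α - 1) * (τ - s) ^ (-α) := by
  have hτ : 0 < τ := (ha.trans_lt hab).trans_le hbτ
  have h₁ := (intervalIntegrable_sub_rpow_mul hα0 hα1 ha hab hbτ hb).const_mul α
  have h₂ := (intervalIntegrable_rpow_mul_sub_rpow (p := α - 1) (q := -α) (by linarith)
    (by linarith) ha hab.le hbτ hτ).const_mul (c * α)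
  have hat : ContinuousAt (fun s ↦ (τ - s) ^ (-α) * (d + c * s ^ α)) a := by
    have : τ - a ≠ 0 := (sub_pos.2 (hab.trans_le hbτ)).ne'
    fun_prop (disch := first | exact Or.inl this | exact Or.inr hα0.le)
  have hFTC := intervalIntegral.integral_eq_sub_of_hasDerivAt_of_tendsto hab
    (fun x hx ↦ hasDerivAt_sub_rpow_mul (ha.trans_lt hx.1) (hx.2.trans_le hbτ)) (h₁.add h₂)
    (hat.tendsto.mono_left nhdsWithin_le_nhds)
    (tendsto_sub_rpow_mul_nhdsLT hα0 hα1 (ha.trans_lt hab) hbτ hb)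
  rw [intervalIntegral.integral_add h₁ h₂, intervalIntegral.integral_const_mul,
    intervalIntegral.integral_const_mul] at hFTC
  linarith

section FittedBasis

variable {α s : ℝ} {t : ℕ → ℝ} {N j k : ℕ}

lemma fittedBasis_eq_zero_of_lt (ht : Monotone t) (hs : t (j + 1) < s) :
    fittedBasis α t N j s = 0 := by
  have hj : t j < s := (ht j.le_succ).trans_lt hs
  unfold fittedBasis
  split_ifs <;> first | rfl | grind

lemma fittedBasis_eq_zero_of_gt (ht : Monotone t) (hj : j ≠ 0) (hs : s < t (j - 1)) :
    fittedBasis α t N j s = 0 := by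
  have hj' : s < t j := hs.trans_le (ht (j.sub_le 1))
  unfold fittedBasis
  split_ifs <;> first | rfl | grind

lemma fittedBasis_of_mem_Ioo (hα : α ≠ 0) (ht0 : t 0 = 0) (hkN : k ≠ N)
    (hs : s ∈ Ioo (t k) (t (k + 1))) :
    fittedBasis α t N k s = (t (k + 1) ^ α - s ^ α) / (t (k + 1) ^ α - t k ^ α) := by
  unfold fittedBasis
  rcases eq_or_ne k 0 with rfl | hk
  · rw [if_pos rfl, if_pos ⟨(ht0 ▸ hs.1).le, hs.2.le⟩, ht0, Real.zero_rpow hα, sub_zero]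
  · rw [if_neg hk, if_neg hkN, if_neg fun h ↦ hs.1.not_ge h.2, if_pos ⟨hs.1.le, hs.2.le⟩]

lemma fittedBasis_succ_of_mem_Icc (hs : s ∈ Icc (t k) (t (k + 1))) :
    fittedBasis α t N (k + 1) s = (s ^ α - t k ^ α) / (t (k + 1) ^ α - t k ^ α) := by
  have hs' : t k ≤ s ∧ s ≤ t (k + 1) := hs
  rcases eq_or_ne (k + 1) N with rfl | hN
  · rw [fittedBasis, if_neg k.succ_ne_zero, if_pos rfl, Nat.add_sub_cancel, if_pos hs']
  · rw [fittedBasis, if_neg k.succ_ne_zero, if_neg hN, Nat.add_sub_cancel, if_pos hs']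

lemma sum_range_fittedBasis_mul_of_mem_Ioo (hα : 0 < α) (ht0 : t 0 = 0) (ht : Monotone t)
    {m : ℕ} (hkN : k ≠ N) (hkm : k + 1 < m) (w : ℕ → ℝ)
    (hs : s ∈ Ioo (t k) (t (k + 1))) :
    ∑ j ∈ Finset.range m, fittedBasis α t N j s * w j =
      w k + (w (k + 1) - w k) / (t (k + 1) ^ α - t k ^ α) * (s ^ α - t k ^ α) := by
  have htk : 0 ≤ t k := ht0 ▸ ht k.zero_le
  have hΔ : t (k + 1) ^ α - t k ^ α ≠ 0 :=
    (sub_pos.2 (Real.rpow_lt_rpow htk (hs.1.trans hs.2) hα)).ne'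
  have hsupp : {k, k + 1} ⊆ Finset.range m := by
    intro j hj
    simp only [Finset.mem_insert, Finset.mem_singleton] at hj
    rcases hj with rfl | rfl <;> simp only [Finset.mem_range] <;> omega
  have hzero : ∀ j ∈ Finset.range m, j ∉ ({k, k + 1} : Finset ℕ) →
      fittedBasis α t N j s * w j = 0 := by
    intro j _ hj
    simp only [Finset.mem_insert, Finset.mem_singleton, not_or] at hj
    rcases lt_or_gt_of_ne hj.1 with hjk | hjk
    · rw [fittedBasis_eq_zero_of_lt ht ((ht hjk).trans_lt hs.1), zero_mul]
    · rw [fittedBasis_eq_zero_of_gt ht (by omega) (hs.2.trans_le (ht (by omega))), zero_mul]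
  rw [← Finset.sum_subset hsupp hzero, Finset.sum_pair (by omega),
    fittedBasis_of_mem_Ioo hα.ne' ht0 hkN hs, fittedBasis_succ_of_mem_Icc (Ioo_subset_Icc_self hs)]
  field_simp
  ring

end FittedBasis

noncomputable def fittedSlope (α : ℝ) (t u : ℕ → ℝ) (k : ℕ) : ℝ :=
  (u (k + 1) - u k) / (t (k + 1) ^ α - t k ^ α)

section Mesh

variable {α : ℝ} {t : ℕ → ℝ} {N n k : ℕ}

lemma fittedSlope_mul_sub (hα : 0 < α) (ht0 : t 0 = 0) (ht : StrictMono t) (u : ℕ → ℝ)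
    (k : ℕ) :
    fittedSlope α t u k * (t (k + 1) ^ α - t k ^ α) = u (k + 1) - u k := by
  have htk : 0 ≤ t k := ht0 ▸ ht.monotone k.zero_le
  exact div_mul_cancel₀ _ (sub_pos.2 (Real.rpow_lt_rpow htk (ht k.lt_succ_self) hα)).ne'

lemma sum_range_fittedBasis_mul_sub_eq (hα : 0 < α) (ht0 : t 0 = 0) (ht : Monotone t)
    (hk : k < n) (hn : n ≤ N) (u : ℕ → ℝ) {s : ℝ} (hs : s ∈ Ioo (t k) (t (k + 1))) :
    ∑ j ∈ Finset.range n, fittedBasis α t N j s * (u n - u j) =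
      (u n - u k + fittedSlope α t u k * t k ^ α) + -fittedSlope α t u k * s ^ α := by
  -- append the vanishing term `j = n`, so that both `k` and `k + 1` lie in the range
  rw [← add_zero (Finset.sum _ _), ← mul_zero (fittedBasis α t N n s), ← sub_self (u n),
    ← Finset.sum_range_succ, sum_range_fittedBasis_mul_of_mem_Ioo hα ht0 ht (by omega)
      (by omega) (fun j ↦ u n - u j) hs, fittedSlope]
  ring

lemma affine_fittedSlope_eq_zero_of_succ_eq (hα : 0 < α) (ht0 : t 0 = 0) (ht : StrictMono t)
    (u : ℕ → ℝ) (h : t (k + 1) = t n) :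
    u n - u k + fittedSlope α t u k * t k ^ α + -fittedSlope α t u k * t n ^ α = 0 := by
  obtain rfl : k + 1 = n := ht.injective h
  linear_combination -fittedSlope_mul_sub hα ht0 ht u k

lemma intervalIntegrable_kernel_mul_sum_fittedBasis (hα0 : 0 < α) (hα1 : α < 1)
    (ht0 : t 0 = 0) (ht : StrictMono t) (hk : k < n) (hn : n ≤ N) (u : ℕ → ℝ) :
    IntervalIntegrable (fun s ↦ (t n - s) ^ (-α - 1) *
      ∑ j ∈ Finset.range n, fittedBasis α t N j s * (u n - u j)) volume (t k) (t (k + 1)) := by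
  refine (intervalIntegrable_sub_rpow_mul hα0 hα1 (ht0 ▸ ht.monotone k.zero_le)
    (ht k.lt_succ_self) (ht.monotone hk)
    (affine_fittedSlope_eq_zero_of_succ_eq hα0 ht0 ht u)).congr_uIoo ?_
  rw [uIoo_of_le (ht k.lt_succ_self).le]
  intro s hs
  simp only [sum_range_fittedBasis_mul_sub_eq hα0 ht0 ht.monotone hk hn u hs]

lemma integral_kernel_mul_sum_fittedBasis (hα0 : 0 < α) (hα1 : α < 1)
    (ht0 : t 0 = 0) (ht : StrictMono t) (hk : k < n) (hn : n ≤ N) (u : ℕ → ℝ) :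
    α * ∫ s in t k..t (k + 1), (t n - s) ^ (-α - 1) *
        ∑ j ∈ Finset.range n, fittedBasis α t N j s * (u n - u j) =
      (t n - t (k + 1)) ^ (-α) * (u n - u (k + 1)) - (t n - t k) ^ (-α) * (u n - u k) +
        α * (fittedSlope α t u k *
          ∫ s in t k..t (k + 1), s ^ (α - 1) * (t n - s) ^ (-α)) := by
  rw [intervalIntegral.integral_congr_Ioo_of_le (ht k.lt_succ_self).le fun s hs ↦ by
      rw [sum_range_fittedBasis_mul_sub_eq hα0 ht0 ht.monotone hk hn u hs],
    integral_sub_rpow_mul_eq hα0 hα1 (ht0 ▸ ht.monotone k.zero_le) (ht k.lt_succ_self)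
      (ht.monotone hk) (affine_fittedSlope_eq_zero_of_succ_eq hα0 ht0 ht u)]
  have hright : u n - u k + fittedSlope α t u k * t k ^ α +
      -fittedSlope α t u k * t (k + 1) ^ α = u n - u (k + 1) := by
    linear_combination -fittedSlope_mul_sub hα0 ht0 ht u k
  rw [hright]
  ring

end Mesh

lemma setIntegral_Ioo_eq_intervalIntegral {f : ℝ → ℝ} {a b : ℝ} (hab : a ≤ b) :
    ∫ s in Ioo a b, f s = ∫ s in a..b, f s := by
  rw [intervalIntegral.integral_of_le hab, integral_Ioc_eq_integral_Ioo]

theorem fittedCaputo_eq_discreteCaputo {α : ℝ} {t : ℕ → ℝ} {N n : ℕ} (hα0 : 0 < α)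
    (hα1 : α < 1) (ht0 : t 0 = 0) (ht : StrictMono t) (hn : 1 ≤ n) (hnN : n ≤ N)
    (u : ℕ → ℝ) :
    (1 / Real.Gamma (1 - α)) *
        ((u n - u 0) / t n ^ α +
          α * ∫ s in Ioo (0 : ℝ) (t n),
            (t n - s) ^ (-α - 1) * ∑ k ∈ Finset.range n, fittedBasis α t N k s * (u n - u k))
      = discreteCaputo α t u n := by
  have htn : 0 < t n := ht0 ▸ ht hn
  have hsplit := intervalIntegral.sum_integral_adjacent_intervals fun k hk ↦
    intervalIntegrable_kernel_mul_sum_fittedBasis hα0 hα1 ht0 ht hk hnN u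
  have htelescope := Finset.sum_range_sub (fun k ↦ (t n - t k) ^ (-α) * (u n - u k)) n
  simp only [ht0, sub_self, mul_zero, sub_zero] at hsplit htelescope
  rw [setIntegral_Ioo_eq_intervalIntegral htn.le, ← hsplit, Finset.mul_sum,
    Finset.sum_congr rfl fun k hk ↦ integral_kernel_mul_sum_fittedBasis hα0 hα1 ht0 ht
      (Finset.mem_range.1 hk) hnN u, Finset.sum_add_distrib, htelescope, discreteCaputo,
    Real.rpow_neg htn.le, ← Finset.mul_sum]
  simp only [fittedSlope, ← setIntegral_Ioo_eq_intervalIntegral (ht (Nat.lt_succ_self _)).le]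
  field_simp
  ring

lemma mesh_zero {r T : ℝ} (hr : r ≠ 0) (N : ℕ) : mesh r T N 0 = 0 := by
  simp [mesh, Real.zero_rpow hr]

lemma mesh_strictMono {r T : ℝ} {N : ℕ} (hr : 0 < r) (hT : 0 < T) (hN : 0 < N) :
    StrictMono (mesh r T N) := by
  intro i j hij
  have hN' : (0 : ℝ) < N := Nat.cast_pos.2 hN
  have hij' : (i : ℝ) / N < j / N := by gcongr
  exact mul_lt_mul_of_pos_left (Real.rpow_lt_rpow (by positivity) hij' hr) hT

theorem discreteCaputo_representation_general (α r T : ℝ) (hα0 : 0 < α) (hα1 : α < 1)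
    (hr : 1 ≤ r) (hT : 0 < T) (N : ℕ) (u : ℕ → ℝ) :
    ∀ n : ℕ, 1 ≤ n → n ≤ N →
      (1 / Real.Gamma (1 - α)) *
          ((u n - u 0) / mesh r T N n ^ α +
            α * ∫ s in Set.Ioo (0 : ℝ) (mesh r T N n),
              (mesh r T N n - s) ^ (-α - 1) *
                ∑ k ∈ Finset.range n, fittedBasis α (mesh r T N) N k s * (u n - u k))
        = discreteCaputo α (mesh r T N) u n := by
  intro n hn hnN
  exact fittedCaputo_eq_discreteCaputo hα0 hα1 (mesh_zero (by linarith) N)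
    (mesh_strictMono (by linarith) hT (by omega)) hn hnN u

/-- Equivalence of the two representations of the discrete fitted Caputo operator:
the Vainikko-type form (obtained from the fitted interpolation of `ω(t)−ω(s)`)
equals the computational form `D_N^α` (obtained by integration by parts on each
subinterval). -/
theorem discreteCaputo_representation (α r T : ℝ) (hα0 : 0 < α) (hα1 : α < 1)
    (hr : 1 ≤ r) (hT : 0 < T) (N : ℕ) (hN : 1 ≤ N) (u : ℕ → ℝ) :
    ∀ n : ℕ, 1 ≤ n → n ≤ N →
      (1 / Real.Gamma (1 - α)) *
          ((u n - u 0) / mesh r T N n ^ α +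
            α * ∫ s in Set.Ioo (0 : ℝ) (mesh r T N n),
              (mesh r T N n - s) ^ (-α - 1) *
                ∑ k ∈ Finset.range n, fittedBasis α (mesh r T N) N k s * (u n - u k))
        = discreteCaputo α (mesh r T N) u n :=
  discreteCaputo_representation_general α r T hα0 hα1 hr hT N u
end

section
/- Let 0 < α < 1 and let t_0 = 0 < t_1 < … < t_N be the graded mesh t_k = T(k/N)^r with r ≥ 1, T > 0. Suppose the real numbers b^0, b^1, …, b^N satisfy b^0 = 0 and b^i ≤ b^j whenever i ≤ j. Then for every n with 1 ≤ n ≤ N, the discrete fitted Caputo operator satisfies D_N^α b^n ≥ (1/Γ(1−α)) · b^n / t_n^α. -/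
open MeasureTheory Set

private lemma aux_integrableOn {α c a b : ℝ} (hα0 : 0 < α) (hα1 : α < 1)
    (ha : 0 ≤ a) (hab : a < b) (hbc : b ≤ c) :
    IntegrableOn (fun s => s ^ (α - 1) * (c - s) ^ (-α)) (Set.Ioo a b) := by
  set m := (a + b) / 2 with hm
  have ham : a < m := by rw [hm]; linarith
  have hmb : m < b := by rw [hm]; linarith
  have hmpos : 0 < m := lt_of_le_of_lt ha ham
  have hcm : 0 < c - m := by linarith
  have hmeas : AEStronglyMeasurable (fun s : ℝ => s ^ (α - 1) * (c - s) ^ (-α)) volume :=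
    ((measurable_id.pow measurable_const).mul
      ((measurable_const.sub measurable_id).pow measurable_const)).aestronglyMeasurable
  have h1 : IntegrableOn (fun s => s ^ (α - 1) * (c - s) ^ (-α)) (Set.Ioc a m) := by
    have hg : IntegrableOn (fun s : ℝ => (c - m) ^ (-α) * s ^ (α - 1)) (Set.Ioc a m) :=
      ((intervalIntegral.intervalIntegrable_rpow' (by linarith : (-1:ℝ) < α - 1)).1).const_mul _
    refine Integrable.mono' hg (hmeas.restrict) ?_
    refine (ae_restrict_iff' measurableSet_Ioc).2 (ae_of_all _ fun s hs => ?_)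
    obtain ⟨hs1, hs2⟩ := hs
    have hs0 : 0 < s := lt_of_le_of_lt ha hs1
    have hcs : 0 < c - s := by linarith
    have hb1 : (c - s) ^ (-α) ≤ (c - m) ^ (-α) :=
      Real.rpow_le_rpow_of_nonpos hcm (by linarith) (by linarith)
    rw [Real.norm_eq_abs, abs_of_nonneg (mul_nonneg (Real.rpow_nonneg hs0.le _)
      (Real.rpow_nonneg hcs.le _)), mul_comm ((c - m) ^ (-α))]
    exact mul_le_mul_of_nonneg_left hb1 (Real.rpow_nonneg hs0.le _)
  have h2 : IntegrableOn (fun s => s ^ (α - 1) * (c - s) ^ (-α)) (Set.Ioc m b) := by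
    have hg0 : IntervalIntegrable (fun x : ℝ => x ^ (-α)) volume (c - b) (c - m) :=
      intervalIntegral.intervalIntegrable_rpow' (by linarith)
    have hg1 : IntervalIntegrable (fun s : ℝ => (c - s) ^ (-α)) volume m b := by
      simpa using (hg0.comp_sub_left c).symm
    have hg : IntegrableOn (fun s : ℝ => m ^ (α - 1) * (c - s) ^ (-α)) (Set.Ioc m b) :=
      (hg1.1).const_mul _
    refine Integrable.mono' hg (hmeas.restrict) ?_
    refine (ae_restrict_iff' measurableSet_Ioc).2 (ae_of_all _ fun s hs => ?_)
    obtain ⟨hs1, hs2⟩ := hs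
    have hcs : 0 ≤ c - s := by linarith
    have hb1 : s ^ (α - 1) ≤ m ^ (α - 1) :=
      Real.rpow_le_rpow_of_nonpos hmpos hs1.le (by linarith)
    rw [Real.norm_eq_abs, abs_of_nonneg (mul_nonneg (Real.rpow_nonneg (by linarith) _)
      (Real.rpow_nonneg hcs _))]
    exact mul_le_mul_of_nonneg_right hb1 (Real.rpow_nonneg hcs _)
  refine (h1.union h2).mono_set fun s hs => ?_
  rcases le_or_gt s m with h | h
  · exact Or.inl ⟨hs.1, h⟩
  · exact Or.inr ⟨h, hs.2.le⟩

private lemma aux_integral_lb {α c a b : ℝ} (hα0 : 0 < α) (hα1 : α < 1)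
    (ha : 0 ≤ a) (hab : a < b) (hbc : b ≤ c) :
    c ^ (-α) * ((b ^ α - a ^ α) / α) ≤ ∫ s in Set.Ioo a b, s ^ (α - 1) * (c - s) ^ (-α) := by
  have hint : IntegrableOn (fun s : ℝ => c ^ (-α) * s ^ (α - 1)) (Set.Ioo a b) :=
    (((intervalIntegral.intervalIntegrable_rpow' (by linarith : (-1:ℝ) < α - 1)).1).mono_set
      Set.Ioo_subset_Ioc_self).const_mul _
  have h1 : ∫ s in Set.Ioo a b, c ^ (-α) * s ^ (α - 1)
      ≤ ∫ s in Set.Ioo a b, s ^ (α - 1) * (c - s) ^ (-α) := by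
    refine setIntegral_mono_on hint (aux_integrableOn hα0 hα1 ha hab hbc)
      measurableSet_Ioo fun s hs => ?_
    have hs0 : 0 < s := lt_of_le_of_lt ha hs.1
    have hcs : 0 < c - s := by have := hs.2; linarith
    have : c ^ (-α) ≤ (c - s) ^ (-α) :=
      Real.rpow_le_rpow_of_nonpos hcs (by linarith) (by linarith)
    rw [mul_comm]
    exact mul_le_mul_of_nonneg_left this (Real.rpow_nonneg hs0.le _)
  refine le_trans (le_of_eq ?_) h1
  rw [MeasureTheory.integral_const_mul, ← MeasureTheory.integral_Ioc_eq_integral_Ioo,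
    ← intervalIntegral.integral_of_le hab.le,
    integral_rpow (Or.inl (by linarith : (-1:ℝ) < α - 1))]
  ring_nf

/-- Lemma 5 of the paper (criterion for discrete barrier functions): if the grid
values `b` vanish at `t = 0` and are nondecreasing, then
`D_N^α b^n ≥ (1/Γ(1−α)) b^n / t_n^α` for `1 ≤ n ≤ N`. -/
theorem discreteCaputo_barrier_lower_bound (α r T : ℝ) (hα0 : 0 < α) (hα1 : α < 1)
    (hr : 1 ≤ r) (hT : 0 < T) (N : ℕ) (hN : 1 ≤ N) (b : ℕ → ℝ)
    (hb0 : b 0 = 0)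
    (hmono : ∀ i j : ℕ, i ≤ j → j ≤ N → b i ≤ b j) :
    ∀ n : ℕ, 1 ≤ n → n ≤ N →
      (1 / Real.Gamma (1 - α)) * (b n / mesh r T N n ^ α)
        ≤ discreteCaputo α (mesh r T N) b n := by
  intro n hn1 hnN
  set t := mesh r T N with ht
  have hNpos : (0:ℝ) < N := by exact_mod_cast hN
  have hr0 : 0 < r := by linarith
  have hstep : ∀ k : ℕ, t k < t (k + 1) := by
    intro k
    simp only [ht, mesh]
    push_cast
    refine mul_lt_mul_of_pos_left (Real.rpow_lt_rpow (by positivity) ?_ hr0) hT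
    gcongr
    linarith
  have hsm : StrictMono t := strictMono_nat_of_lt_succ hstep
  have ht0 : t 0 = 0 := by
    simp [ht, mesh, Real.zero_rpow (by linarith : r ≠ 0)]
  have htnn : ∀ k : ℕ, 0 ≤ t k := by
    intro k
    rw [← ht0]
    exact hsm.monotone (Nat.zero_le k)
  have htn : 0 < t n := by
    rw [← ht0]; exact hsm (by omega)
  have hΓ : 0 < Real.Gamma (1 - α) := Real.Gamma_pos_of_pos (by linarith)
  have htnα : 0 < t n ^ α := Real.rpow_pos_of_pos htn α
  -- per-term lower bound
  have key : ∀ k ∈ Finset.range n,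
      (b (k + 1) - b k) * ((t n ^ α)⁻¹ / α)
        ≤ (b (k + 1) - b k) / (t (k + 1) ^ α - t k ^ α) *
            ∫ s in Set.Ioo (t k) (t (k + 1)), s ^ (α - 1) * (t n - s) ^ (-α) := by
    intro k hk
    rw [Finset.mem_range] at hk
    have hab : t k < t (k + 1) := hstep k
    have hbc : t (k + 1) ≤ t n := hsm.monotone (by omega)
    have hD : 0 < t (k + 1) ^ α - t k ^ α :=
      sub_pos.2 (Real.rpow_lt_rpow (htnn k) hab hα0)
    have hbk : 0 ≤ b (k + 1) - b k := sub_nonneg.2 (hmono k (k + 1) (by omega) (by omega))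
    have hI := aux_integral_lb hα0 hα1 (htnn k) hab hbc
    have hc : 0 ≤ (b (k + 1) - b k) / (t (k + 1) ^ α - t k ^ α) := by positivity
    calc (b (k + 1) - b k) * ((t n ^ α)⁻¹ / α)
        = (b (k + 1) - b k) / (t (k + 1) ^ α - t k ^ α) *
            (t n ^ (-α) * ((t (k + 1) ^ α - t k ^ α) / α)) := by
          rw [Real.rpow_neg (htn.le)]
          field_simp
      _ ≤ _ := mul_le_mul_of_nonneg_left hI hc
  have hsum := Finset.sum_le_sum key
  rw [← Finset.sum_mul, Finset.sum_range_sub, hb0, sub_zero] at hsum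
  have hfinal := mul_le_mul_of_nonneg_left hsum
    (le_of_lt (div_pos hα0 hΓ) : (0:ℝ) ≤ α / Real.Gamma (1 - α))
  rw [discreteCaputo]
  refine le_trans (le_of_eq ?_) hfinal
  field_simp
end

section
/- Let 0 < α < 1, p > 0, l > 0, T > 0, integers M ≥ 2, N ≥ 1, r ≥ 1, and c_m ≥ 0 for 0 ≤ m ≤ M. Let t_n = T(n/N)^r, x_m = m l/M, h = l/M. Suppose the grid function u^n_m (0 ≤ m ≤ M, 0 ≤ n ≤ N) satisfies D_N^α u^n_m − p (u^n_{m+1} − 2u^n_m + u^n_{m−1})/h² + c_m u^n_m = f^n_m for 1 ≤ m ≤ M−1 and 1 ≤ n ≤ N, with u^n_0 = u^n_M = 0 for 1 ≤ n ≤ N and u^0_m = φ_m for 0 ≤ m ≤ M. If f^n_m ≥ 0 for all 1 ≤ m ≤ M−1, 1 ≤ n ≤ N and φ_m ≥ 0 for all 0 ≤ m ≤ M, then u^n_m ≥ 0 for all 0 ≤ m ≤ M and 0 ≤ n ≤ N. -/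
open MeasureTheory

section Aux

open Set

set_option linter.unusedSectionVars false

lemma abel_bound (a u : ℕ → ℝ) (n : ℕ)
    (ha : ∀ k, k < n → 0 ≤ a k)
    (hmono : ∀ k, k + 1 < n → a k ≤ a (k + 1))
    (hu : ∀ k, k < n → 0 ≤ u k) :
    ∀ j, j + 1 ≤ n → ∑ k ∈ Finset.range (j + 1), a k * (u (k + 1) - u k) ≤ a j * u (j + 1) := by
  intro j
  induction j with
  | zero =>
    intro h
    rw [Finset.sum_range_one]
    have := mul_nonneg (ha 0 h) (hu 0 h)
    nlinarith
  | succ j ih =>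
    intro h
    rw [Finset.sum_range_succ]
    have h1 := ih (by omega)
    have h2 := mul_nonneg (sub_nonneg.2 (hmono j (by omega))) (hu (j + 1) (by omega))
    nlinarith

variable {α : ℝ} (hα0 : 0 < α) (hα1 : α < 1) {t : ℕ → ℝ}
  (ht0 : t 0 = 0) (hmono : ∀ k, t k < t (k + 1))

include ht0 hmono in
lemma t_nonneg (k : ℕ) : 0 ≤ t k := by
  have hs : StrictMono t := strictMono_nat_of_lt_succ hmono
  calc (0:ℝ) = t 0 := ht0.symm
    _ ≤ t k := hs.monotone (Nat.zero_le k)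

include hmono in
lemma t_mono : Monotone t := (strictMono_nat_of_lt_succ hmono).monotone

include hα0 ht0 hmono in
lemma I_nonneg (n k : ℕ) (hk : k + 1 ≤ n) :
    0 ≤ ∫ s in Ioo (t k) (t (k + 1)), s ^ (α - 1) * (t n - s) ^ (-α) := by
  refine setIntegral_nonneg measurableSet_Ioo fun s hs => ?_
  have hs0 : 0 ≤ s := le_trans (t_nonneg ht0 hmono k) hs.1.le
  have hsn : s ≤ t n := hs.2.le.trans (t_mono hmono hk)
  exact mul_nonneg (Real.rpow_nonneg hs0 _) (Real.rpow_nonneg (by linarith) _)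

include hα0 hα1 ht0 hmono in
lemma J_eval (k : ℕ) :
    ∫ s in Ioo (t k) (t (k + 1)), s ^ (α - 1) = (t (k + 1) ^ α - t k ^ α) / α := by
  rw [← integral_Ioc_eq_integral_Ioo, ← intervalIntegral.integral_of_le (hmono k).le,
    integral_rpow (Or.inl (by linarith))]
  norm_num

include hα0 hα1 ht0 hmono in
lemma d_pos (k : ℕ) : 0 < t (k + 1) ^ α - t k ^ α := by
  have := Real.rpow_lt_rpow (t_nonneg ht0 hmono k) (hmono k) hα0
  linarith

include hα0 hα1 ht0 hmono in
lemma I_upper (n k : ℕ) (hk : k + 1 < n) :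
    (∫ s in Ioo (t k) (t (k + 1)), s ^ (α - 1) * (t n - s) ^ (-α)) ≤
      (t n - t (k + 1)) ^ (-α) * ((t (k + 1) ^ α - t k ^ α) / α) := by
  have hG : (0:ℝ) < t n - t (k + 1) := by
    have := (strictMono_nat_of_lt_succ hmono) hk
    linarith
  have hgi : Integrable (fun s : ℝ => (t n - t (k + 1)) ^ (-α) * s ^ (α - 1))
      (volume.restrict (Ioo (t k) (t (k + 1)))) := by
    have := (intervalIntegral.intervalIntegrable_rpow' (r := α - 1) (by linarith)).const_mul
      ((t n - t (k + 1)) ^ (-α)) (a := t k) (b := t (k + 1))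
    rwa [intervalIntegrable_iff_integrableOn_Ioo_of_le (hmono k).le] at this
  have hle : ∀ s ∈ Ioo (t k) (t (k + 1)),
      s ^ (α - 1) * (t n - s) ^ (-α) ≤ (t n - t (k + 1)) ^ (-α) * s ^ (α - 1) := by
    intro s hs
    have hs0 : 0 ≤ s := le_trans (t_nonneg ht0 hmono k) hs.1.le
    have h1 : (t n - s) ^ (-α) ≤ (t n - t (k + 1)) ^ (-α) :=
      Real.rpow_le_rpow_of_nonpos hG (by linarith [hs.2]) (by linarith)
    calc s ^ (α - 1) * (t n - s) ^ (-α)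
        ≤ s ^ (α - 1) * (t n - t (k + 1)) ^ (-α) :=
          mul_le_mul_of_nonneg_left h1 (Real.rpow_nonneg hs0 _)
      _ = (t n - t (k + 1)) ^ (-α) * s ^ (α - 1) := by ring
  calc (∫ s in Ioo (t k) (t (k + 1)), s ^ (α - 1) * (t n - s) ^ (-α))
      ≤ ∫ s in Ioo (t k) (t (k + 1)), (t n - t (k + 1)) ^ (-α) * s ^ (α - 1) := by
        refine integral_mono_of_nonneg ?_ hgi ?_
        · refine (ae_restrict_iff' measurableSet_Ioo).2 (ae_of_all _ fun s hs => ?_)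
          have hs0 : 0 ≤ s := le_trans (t_nonneg ht0 hmono k) hs.1.le
          have hsn : s ≤ t n := by
            have := hs.2
            linarith [hG]
          exact mul_nonneg (Real.rpow_nonneg hs0 _) (Real.rpow_nonneg (by linarith) _)
        · exact (ae_restrict_iff' measurableSet_Ioo).2 (ae_of_all _ hle)
    _ = (t n - t (k + 1)) ^ (-α) * ((t (k + 1) ^ α - t k ^ α) / α) := by
        rw [integral_const_mul, J_eval hα0 hα1 ht0 hmono]

include hα0 hα1 ht0 hmono in
lemma f_integrable (n k : ℕ) (hk1 : 1 ≤ k) (hkn : k + 1 ≤ n) :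
    Integrable (fun s : ℝ => s ^ (α - 1) * (t n - s) ^ (-α))
      (volume.restrict (Ioo (t k) (t (k + 1)))) := by
  have htk : 0 < t k := by
    have := (strictMono_nat_of_lt_succ hmono) (Nat.lt_of_lt_of_le Nat.zero_lt_one hk1)
    rw [ht0] at this
    exact this
  have hg : Integrable (fun s : ℝ => t k ^ (α - 1) * (t n - s) ^ (-α))
      (volume.restrict (Ioo (t k) (t (k + 1)))) := by
    have h1 : IntervalIntegrable (fun x : ℝ => x ^ (-α)) volume
        (t n - t k) (t n - t (k + 1)) := intervalIntegral.intervalIntegrable_rpow' (by linarith)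
    have h2 := (h1.comp_sub_left (t n)).const_mul (t k ^ (α - 1))
    simp only [sub_sub_cancel] at h2
    rwa [intervalIntegrable_iff_integrableOn_Ioo_of_le (hmono k).le] at h2
  refine hg.mono' ?_ ?_
  · refine ContinuousOn.aestronglyMeasurable ?_ measurableSet_Ioo
    intro s hs
    have hs0 : (0:ℝ) < s := lt_of_le_of_lt htk.le hs.1
    have hsn : s < t n := lt_of_lt_of_le hs.2 (t_mono hmono hkn)
    exact ContinuousWithinAt.mul
      ((Real.continuousAt_rpow_const s (α - 1) (Or.inl hs0.ne')).continuousWithinAt)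
      (((continuous_const.sub continuous_id).continuousAt.rpow_const
        (Or.inl (by simp; linarith))).continuousWithinAt)
  · refine (ae_restrict_iff' measurableSet_Ioo).2 (ae_of_all _ fun s hs => ?_)
    have hs0 : (0:ℝ) < s := lt_of_le_of_lt htk.le hs.1
    have hsn : s < t n := lt_of_lt_of_le hs.2 (t_mono hmono hkn)
    have hnn : 0 ≤ s ^ (α - 1) * (t n - s) ^ (-α) :=
      mul_nonneg (Real.rpow_nonneg hs0.le _) (Real.rpow_nonneg (by linarith) _)
    rw [Real.norm_of_nonneg hnn]
    exact mul_le_mul_of_nonneg_right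
      (Real.rpow_le_rpow_of_nonpos htk hs.1.le (by linarith))
      (Real.rpow_nonneg (by linarith) _)

include hα0 hα1 ht0 hmono in
lemma I_lower (n k : ℕ) (hk1 : 1 ≤ k) (hkn : k + 1 ≤ n) :
    (t n - t k) ^ (-α) * ((t (k + 1) ^ α - t k ^ α) / α) ≤
      ∫ s in Ioo (t k) (t (k + 1)), s ^ (α - 1) * (t n - s) ^ (-α) := by
  have htk : 0 < t k := by
    have := (strictMono_nat_of_lt_succ hmono) (Nat.lt_of_lt_of_le Nat.zero_lt_one hk1)
    rw [ht0] at this; exact this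
  have key : (∫ s in Ioo (t k) (t (k + 1)), (t n - t k) ^ (-α) * s ^ (α - 1)) ≤
      ∫ s in Ioo (t k) (t (k + 1)), s ^ (α - 1) * (t n - s) ^ (-α) := by
    refine integral_mono_of_nonneg ?_ (f_integrable hα0 hα1 ht0 hmono n k hk1 hkn) ?_
    · refine (ae_restrict_iff' measurableSet_Ioo).2 (ae_of_all _ fun s hs => ?_)
      have hs0 : (0:ℝ) < s := lt_of_le_of_lt htk.le hs.1
      have : 0 ≤ t n - t k := by
        have := t_mono hmono (le_trans (Nat.le_succ k) hkn)
        linarith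
      exact mul_nonneg (Real.rpow_nonneg (by linarith) _) (Real.rpow_nonneg hs0.le _)
    · refine (ae_restrict_iff' measurableSet_Ioo).2 (ae_of_all _ fun s hs => ?_)
      have hs0 : (0:ℝ) < s := lt_of_le_of_lt htk.le hs.1
      have hsn : s < t n := lt_of_lt_of_le hs.2 (t_mono hmono hkn)
      have h1 : (t n - t k) ^ (-α) ≤ (t n - s) ^ (-α) :=
        Real.rpow_le_rpow_of_nonpos (by linarith) (by linarith [hs.1]) (by linarith)
      calc (t n - t k) ^ (-α) * s ^ (α - 1)
          ≤ (t n - s) ^ (-α) * s ^ (α - 1) :=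
            mul_le_mul_of_nonneg_right h1 (Real.rpow_nonneg hs0.le _)
        _ = s ^ (α - 1) * (t n - s) ^ (-α) := by ring
  calc (t n - t k) ^ (-α) * ((t (k + 1) ^ α - t k ^ α) / α)
      = ∫ s in Ioo (t k) (t (k + 1)), (t n - t k) ^ (-α) * s ^ (α - 1) := by
        rw [integral_const_mul, J_eval hα0 hα1 ht0 hmono]
    _ ≤ _ := key

end Aux

/-- Lemma 4 of the paper (discrete maximum principle for the fitted scheme):
if the right-hand side and the initial data of the fitted scheme are nonnegative,
then the discrete solution is nonnegative at every mesh point. -/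
theorem fitted_scheme_maximum_principle (α p l T r : ℝ) (M N : ℕ)
    (hα0 : 0 < α) (hα1 : α < 1) (hp : 0 < p) (hl : 0 < l) (hT : 0 < T)
    (hr : 1 ≤ r) (hM : 2 ≤ M) (hN : 1 ≤ N)
    (c : ℕ → ℝ) (hc : ∀ m : ℕ, m ≤ M → 0 ≤ c m)
    (U : ℕ → ℕ → ℝ) (f : ℕ → ℕ → ℝ) (φ : ℕ → ℝ)
    (hscheme : ∀ m n : ℕ, 1 ≤ m → m + 1 ≤ M → 1 ≤ n → n ≤ N →
      discreteCaputo α (mesh r T N) (fun j => U j m) n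
          - p * ((U n (m + 1) - 2 * U n m + U n (m - 1)) / (l / M) ^ 2)
          + c m * U n m
        = f n m)
    (hbc : ∀ n : ℕ, 1 ≤ n → n ≤ N → U n 0 = 0 ∧ U n M = 0)
    (hic : ∀ m : ℕ, m ≤ M → U 0 m = φ m)
    (hf : ∀ m n : ℕ, 1 ≤ m → m + 1 ≤ M → 1 ≤ n → n ≤ N → 0 ≤ f n m)
    (hφ : ∀ m : ℕ, m ≤ M → 0 ≤ φ m) :
    ∀ m n : ℕ, m ≤ M → n ≤ N → 0 ≤ U n m := by
  classical
  have hNpos : (0:ℝ) < (N:ℝ) := by exact_mod_cast hN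
  have hMpos : (0:ℝ) < (M:ℝ) := by
    have : (0:ℕ) < M := by omega
    exact_mod_cast this
  have hrpos : (0:ℝ) < r := by linarith
  set t : ℕ → ℝ := mesh r T N with htdef
  have ht0 : t 0 = 0 := by
    simp [htdef, mesh, Real.zero_rpow hrpos.ne']
  have htmono : ∀ k : ℕ, t k < t (k + 1) := by
    intro k
    have hfrac : ((k:ℝ)) / (N:ℝ) < (((k + 1 : ℕ)):ℝ) / (N:ℝ) := by
      rw [div_lt_div_iff_of_pos_right hNpos]
      push_cast; linarith
    have := Real.rpow_lt_rpow (by positivity) hfrac hrpos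
    simpa [htdef, mesh] using mul_lt_mul_of_pos_left this hT
  have hΓ : 0 < α / Real.Gamma (1 - α) :=
    div_pos hα0 (Real.Gamma_pos_of_pos (by linarith))
  have key : ∀ n : ℕ, n ≤ N → ∀ m : ℕ, m ≤ M → 0 ≤ U n m := by
    intro n
    induction n using Nat.strong_induction_on with
    | _ n IH =>
      intro hn
      rcases Nat.eq_zero_or_pos n with rfl | hn1
      · intro m hm; rw [hic m hm]; exact hφ m hm
      by_contra hcon
      push_neg at hcon
      obtain ⟨m₁, hm₁, hneg⟩ := hcon
      obtain ⟨m₀, hm₀mem, hm₀min⟩ := Finset.exists_min_image (Finset.range (M + 1)) (U n)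
        ⟨m₁, Finset.mem_range.2 (by omega)⟩
      set B := U n m₀ with hBdef
      have hBneg : B < 0 := lt_of_le_of_lt (hm₀min m₁ (Finset.mem_range.2 (by omega))) hneg
      have hBle : ∀ i, i ≤ M → B ≤ U n i := fun i hi =>
        hm₀min i (Finset.mem_range.2 (by omega))
      have hex : ∃ i, i ≤ M ∧ U n i ≤ B :=
        ⟨m₀, by have := Finset.mem_range.1 hm₀mem; omega, le_refl _⟩
      set m' := Nat.find hex with hm'def
      obtain ⟨hm'M, hUm'B⟩ := Nat.find_spec hex
      have hUm' : U n m' < 0 := lt_of_le_of_lt hUm'B hBneg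
      have hm'0 : m' ≠ 0 := by
        intro h
        rw [h, (hbc n hn1 hn).1] at hUm'
        exact absurd hUm' (lt_irrefl 0)
      have hm'Mne : m' ≠ M := by
        intro h
        rw [h, (hbc n hn1 hn).2] at hUm'
        exact absurd hUm' (lt_irrefl 0)
      have h1m : 1 ≤ m' := by omega
      have hm'1M : m' + 1 ≤ M := by omega
      have hleft : B < U n (m' - 1) := by
        have hmin := Nat.find_min hex (m := m' - 1) (by omega)
        push_neg at hmin
        exact hmin (by omega)
      have hright : B ≤ U n (m' + 1) := hBle _ hm'1M
      have hΔ : 0 < U n (m' + 1) - 2 * U n m' + U n (m' - 1) := by linarith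
      have hsq : (0:ℝ) < (l / (M:ℝ)) ^ 2 := by positivity
      have hDpos : 0 < discreteCaputo α t (fun j => U j m') n := by
        have hs := hscheme m' n h1m hm'1M hn1 hn
        have hf' := hf m' n h1m hm'1M hn1 hn
        have hcU : c m' * U n m' ≤ 0 :=
          mul_nonpos_of_nonneg_of_nonpos (hc m' hm'M) hUm'.le
        have hpd : 0 < p * ((U n (m' + 1) - 2 * U n m' + U n (m' - 1)) / (l / (M:ℝ)) ^ 2) :=
          mul_pos hp (div_pos hΔ hsq)
        linarith [hs]
      set u : ℕ → ℝ := fun j => U j m' with hudef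
      set I : ℕ → ℝ :=
        fun k => ∫ s in Set.Ioo (t k) (t (k + 1)), s ^ (α - 1) * (t n - s) ^ (-α) with hIdef
      set d : ℕ → ℝ := fun k => t (k + 1) ^ α - t k ^ α with hddef
      set a : ℕ → ℝ := fun k => I k / d k with hadef
      have hdpos : ∀ k, 0 < d k := fun k => d_pos hα0 hα1 ht0 htmono k
      have ha : ∀ k, k < n → 0 ≤ a k := fun k hk =>
        div_nonneg (I_nonneg hα0 ht0 htmono n k hk) (hdpos k).le
      have hamono : ∀ k, k + 1 < n → a k ≤ a (k + 1) := by
        intro k hk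
        have h1 := I_upper hα0 hα1 ht0 htmono n k hk
        have h2 := I_lower hα0 hα1 ht0 htmono n (k + 1) (by omega) (by omega)
        have step1 : a k ≤ (t n - t (k + 1)) ^ (-α) / α := by
          show I k / d k ≤ (t n - t (k + 1)) ^ (-α) / α
          rw [div_le_div_iff₀ (hdpos k) hα0]
          calc I k * α ≤ ((t n - t (k + 1)) ^ (-α) * (d k / α)) * α :=
                mul_le_mul_of_nonneg_right h1 hα0.le
            _ = (t n - t (k + 1)) ^ (-α) * d k := by field_simp
        have step2 : (t n - t (k + 1)) ^ (-α) / α ≤ a (k + 1) := by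
          show (t n - t (k + 1)) ^ (-α) / α ≤ I (k + 1) / d (k + 1)
          rw [div_le_div_iff₀ hα0 (hdpos (k + 1))]
          calc (t n - t (k + 1)) ^ (-α) * d (k + 1)
              = ((t n - t (k + 1)) ^ (-α) * (d (k + 1) / α)) * α := by field_simp
            _ ≤ I (k + 1) * α := mul_le_mul_of_nonneg_right h2 hα0.le
        exact le_trans step1 step2
      have hu : ∀ k, k < n → 0 ≤ u k := fun k hk => IH k hk (by omega) m' hm'M
      have habel := abel_bound a u n ha hamono hu (n - 1) (by omega)
      have hn' : n - 1 + 1 = n := by omega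
      rw [hn'] at habel
      have hD : discreteCaputo α t u n = (α / Real.Gamma (1 - α)) *
          ∑ k ∈ Finset.range n, a k * (u (k + 1) - u k) := by
        unfold discreteCaputo
        congr 1
        refine Finset.sum_congr rfl fun k _ => ?_
        simp only [hadef, hIdef, hddef]
        ring
      have hDnonpos : discreteCaputo α t u n ≤ 0 := by
        rw [hD]
        refine mul_nonpos_of_nonneg_of_nonpos hΓ.le ?_
        refine le_trans habel (mul_nonpos_of_nonneg_of_nonpos (ha (n - 1) (by omega)) ?_)
        show U n m' ≤ 0
        exact hUm'.le
      linarith [hDpos, hDnonpos]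
  intro m n hm hn
  exact key n hn m hm
end
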